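/- Let f : [0, π] → [0, π] be defined by f(θ) = arccos((sin θ + (π − θ)·cos θ)/π). For any initial angle θ⁰ ∈ (0, π), the sequence defined by θ^{ℓ+1} = f(θ^ℓ) is strictly decreasing and converges to 0 as ℓ → ∞. -/

import Mathlib

/-!
On `(0, π)` the argument of `arccos` in `f(θ)` lies strictly between `cos θ` and `1`, so
`0 < f(θ) < θ`. The iterates therefore decrease and converge to some `L ∈ [0, θ⁰)`; if `L > 0`
it would be a fixed point of the continuous map `f` in `(0, π)`, which `f(L) < L` rules out.
-/

open Real Filter Set Topology

noncomputable def infWidthMap (θ : ℝ) : ℝ :=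
  Real.arccos ((Real.sin θ + (π - θ) * Real.cos θ) / π)

section IterateBelowSelf

variable {f : ℝ → ℝ} {a b : ℝ}

theorem iterate_mem_Ioo_of_lt_self (hf : ∀ x ∈ Ioo a b, f x ∈ Ioo a x) {x : ℝ}
    (hx : x ∈ Ioo a b) (n : ℕ) : f^[n] x ∈ Ioo a b := by
  induction n with
  | zero => exact hx
  | succ n ih =>
    rw [Function.iterate_succ_apply']
    exact ⟨(hf _ ih).1, (hf _ ih).2.trans ih.2⟩

theorem strictAnti_iterate_of_lt_self (hf : ∀ x ∈ Ioo a b, f x ∈ Ioo a x) {x : ℝ}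
    (hx : x ∈ Ioo a b) : StrictAnti fun n => f^[n] x :=
  strictAnti_nat_of_succ_lt fun n => by
    rw [Function.iterate_succ_apply']
    exact (hf _ (iterate_mem_Ioo_of_lt_self hf hx n)).2

theorem tendsto_iterate_of_lt_self (hcont : ContinuousOn f (Ioo a b))
    (hf : ∀ x ∈ Ioo a b, f x ∈ Ioo a x) {x : ℝ} (hx : x ∈ Ioo a b) :
    Tendsto (fun n => f^[n] x) atTop (𝓝 a) := by
  have hmem := iterate_mem_Ioo_of_lt_self hf hx
  have hbdd : BddBelow (range fun n => f^[n] x) := ⟨a, by rintro _ ⟨n, rfl⟩; exact (hmem n).1.le⟩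
  have hlim := tendsto_atTop_ciInf (strictAnti_iterate_of_lt_self hf hx).antitone hbdd
  set L := ⨅ n, f^[n] x
  have haL : a ≤ L := le_ciInf fun n => (hmem n).1.le
  have hLb : L < b := (ciInf_le hbdd 0).trans_lt hx.2
  obtain rfl | haL := haL.eq_or_lt
  · exact hlim
  have hL : L ∈ Ioo a b := ⟨haL, hLb⟩
  have hfix : f L = L :=
    isFixedPt_of_tendsto_iterate hlim (hcont.continuousAt (isOpen_Ioo.mem_nhds hL))
  exact ((hf L hL).2.ne hfix).elim

end IterateBelowSelf

theorem mul_cos_lt_sin {θ : ℝ} (h₀ : 0 < θ) (hπ : θ ≤ π) : θ * cos θ < sin θ := by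
  have hderiv : ∀ x, HasDerivAt (fun t => sin t - t * cos t) (x * sin x) x := fun x =>
    ((hasDerivAt_sin x).sub ((hasDerivAt_id' x).mul (hasDerivAt_cos x))).congr_deriv (by ring)
  have hmono : StrictMonoOn (fun t => sin t - t * cos t) (Icc 0 π) := by
    refine strictMonoOn_of_deriv_pos (convex_Icc 0 π) (by fun_prop) fun x hx => ?_
    rw [interior_Icc] at hx
    rw [(hderiv x).deriv]
    exact mul_pos hx.1 (sin_pos_of_pos_of_lt_pi hx.1 hx.2)
  simpa using hmono (left_mem_Icc.mpr pi_pos.le) ⟨h₀.le, hπ⟩ h₀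

theorem sin_add_pi_sub_mul_cos_lt_pi {θ : ℝ} (h₀ : 0 < θ) (hπ : θ ≤ π) :
    sin θ + (π - θ) * cos θ < π := by
  have hderiv : ∀ x, HasDerivAt (fun t => sin t + (π - t) * cos t) (-((π - x) * sin x)) x :=
    fun x => ((hasDerivAt_sin x).add (((hasDerivAt_id' x).const_sub π).mul
      (hasDerivAt_cos x))).congr_deriv (by ring)
  have hanti : StrictAntiOn (fun t => sin t + (π - t) * cos t) (Icc 0 π) := by
    refine strictAntiOn_of_deriv_neg (convex_Icc 0 π) (by fun_prop) fun x hx => ?_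
    rw [interior_Icc] at hx
    rw [(hderiv x).deriv, neg_lt_zero]
    exact mul_pos (sub_pos.mpr hx.2) (sin_pos_of_pos_of_lt_pi hx.1 hx.2)
  simpa using hanti (left_mem_Icc.mpr pi_pos.le) ⟨h₀.le, hπ⟩ h₀

theorem continuous_infWidthMap : Continuous infWidthMap :=
  continuous_arccos.comp (by fun_prop)

theorem infWidthMap_mem_Ioo {θ : ℝ} (h : θ ∈ Ioo 0 π) : infWidthMap θ ∈ Ioo 0 θ := by
  set g := (sin θ + (π - θ) * cos θ) / π
  have hg_lt_one : g < 1 := (div_lt_one pi_pos).mpr (sin_add_pi_sub_mul_cos_lt_pi h.1 h.2.le)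
  have hcos_lt_g : cos θ < g := by
    rw [lt_div_iff₀ pi_pos]
    linarith [mul_cos_lt_sin h.1 h.2.le]
  have hcos : cos θ ∈ Icc (-1) 1 := ⟨neg_one_le_cos θ, cos_le_one θ⟩
  refine ⟨arccos_pos.mpr hg_lt_one, ?_⟩
  have := strictAntiOn_arccos hcos ⟨hcos.1.trans hcos_lt_g.le, hg_lt_one.le⟩ hcos_lt_g
  rwa [arccos_cos h.1.le h.2.le] at this

/-- For any initial angle `θ⁰ ∈ (0, π)`, the sequence defined by `θ^{ℓ+1} = f(θ^ℓ)`,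
where `f` is the infinite width angle update map, is strictly decreasing and converges
to `0` as `ℓ → ∞`. -/
theorem infWidthMap_iterates_tendsto_zero (θ0 : ℝ) (hθ0 : θ0 ∈ Set.Ioo (0 : ℝ) π) :
    StrictAnti (fun ℓ : ℕ => infWidthMap^[ℓ] θ0) ∧
    Tendsto (fun ℓ : ℕ => infWidthMap^[ℓ] θ0) atTop (nhds 0) :=
  ⟨strictAnti_iterate_of_lt_self (fun _ => infWidthMap_mem_Ioo) hθ0,
    tendsto_iterate_of_lt_self continuous_infWidthMap.continuousOn
      (fun _ => infWidthMap_mem_Ioo) hθ0⟩
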